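/- Let p be an odd prime, G = ℤ/pℤ ⊕ ℤ/pℤ, and define M₁ = ℤ[G]·T_G, M₂ = ℤ[G] ⊕ ℤ[G]·T_G, M₃ = ℤ[G] ⊕ ℤ[G] ⊕ ℤ[G]·T₃ ⊕ ℤ[G]·T_{p+1}, with G-module maps d₁(n·T_G) = (n·T_G, −p·n·T_G) and d₂(η, n·T_G) = (−η t₁, −η t₂, η T₃ + n T_G, η T_{p+1} + n T_G). Then d₂ ∘ d₁ = 0, d₁ is injective, and ker(d₂) = im(d₁). -/

import Mathlib

open MonoidAlgebra

/-!
The first two components of `d₂(η, ξ)` vanish iff `η` is fixed by right multiplication by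
`τ₁` and `τ₂`, hence by all of `G`; that means `η` has constant coefficients, i.e.
`η ∈ ℤ[G]·T_G`. On this ideal every group element acts trivially, so each trace
`T₃, T_{p+1}` acts as multiplication by `p`, and the last two components say exactly `ξ = -p η`.
-/

abbrev GrpP (p : ℕ) := Multiplicative (ZMod p × ZMod p)
abbrev GA (p : ℕ) := MonoidAlgebra ℤ (GrpP p)

/-- The group element `τ₁^a τ₂^b` viewed in the group ring `ℤ[G]`. -/
noncomputable def τ (p : ℕ) (v : ZMod p × ZMod p) : GA p :=
  MonoidAlgebra.of ℤ (GrpP p) (Multiplicative.ofAdd v)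

/-- The "trace" element `1 + σ + ⋯ + σ^{p-1}` for `σ = τ₁^a τ₂^b`. -/
noncomputable def tr (p : ℕ) (v : ZMod p × ZMod p) : GA p :=
  ∑ k ∈ Finset.range p, τ p v ^ k

/-- The sum of all group elements `T_G = ∑_{g ∈ G} g`. -/
noncomputable def TG (p : ℕ) [NeZero p] : GA p :=
  ∑ g : GrpP p, MonoidAlgebra.of ℤ (GrpP p) g

theorem mul_pow_eq_self {M : Type*} [Monoid M] {x a : M} (h : x * a = x) (n : ℕ) :
    x * a ^ n = x := by
  induction n with
  | zero => rw [pow_zero, mul_one]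
  | succ n ih => rw [pow_succ, ← mul_assoc, ih, h]

theorem mul_geom_sum_eq_of_mul_eq_self {R : Type*} [Semiring R] {x a : R} (h : x * a = x)
    (n : ℕ) : x * ∑ k ∈ Finset.range n, a ^ k = n * x := by
  simp only [Finset.mul_sum, mul_pow_eq_self h, Finset.sum_const, Finset.card_range,
    nsmul_eq_mul]

namespace MonoidAlgebra

variable (k G : Type*) [Semiring k] [Group G] [Fintype G]

noncomputable def groupSum : MonoidAlgebra k G :=
  ∑ g, of k G g

variable {k G}

theorem groupSum_mul_of (g : G) : groupSum k G * of k G g = groupSum k G := by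
  simp only [groupSum, Finset.sum_mul, ← map_mul]
  exact Fintype.sum_equiv (Equiv.mulRight g) _ _ fun _ => rfl

theorem coeff_groupSum (g : G) : (groupSum k G).coeff g = 1 := by
  classical
  simp [groupSum, coeff_sum, Finsupp.single_apply]

theorem mem_span_groupSum_iff {x : MonoidAlgebra k G} :
    x ∈ Ideal.span {groupSum k G} ↔ ∀ g, x * of k G g = x := by
  rw [Ideal.mem_span_singleton']
  constructor
  · rintro ⟨c, rfl⟩ g
    rw [mul_assoc, groupSum_mul_of]
  · intro hx
    have hconst (g : G) : x.coeff 1 = x.coeff g := by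
      simpa using congrArg (coeff · g) (hx g)
    refine ⟨single 1 (x.coeff 1), ?_⟩
    ext g
    rw [coeff_single_one_mul, coeff_groupSum, mul_one, hconst]

end MonoidAlgebra

open MonoidAlgebra

theorem TG_eq_groupSum (p : ℕ) [NeZero p] : TG p = groupSum ℤ (GrpP p) := rfl

theorem τ_pow (p : ℕ) (v : ZMod p × ZMod p) (n : ℕ) :
    τ p v ^ n = of ℤ (GrpP p) (Multiplicative.ofAdd (n • v)) := by
  rw [τ, ← map_pow, ← ofAdd_nsmul]

theorem of_ofAdd_eq_τ_pow_mul_τ_pow (p : ℕ) [NeZero p] (v : ZMod p × ZMod p) :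
    of ℤ (GrpP p) (Multiplicative.ofAdd v) = τ p (1, 0) ^ v.1.val * τ p (0, 1) ^ v.2.val := by
  rw [τ_pow, τ_pow, ← map_mul, ← ofAdd_add]
  congr 2
  ext <;> simp

theorem mem_span_TG_iff (p : ℕ) [NeZero p] {η : GA p} :
    η ∈ Ideal.span {TG p} ↔ η * τ p (1, 0) = η ∧ η * τ p (0, 1) = η := by
  rw [TG_eq_groupSum, mem_span_groupSum_iff]
  refine ⟨fun h => ⟨h _, h _⟩, fun ⟨h₁, h₂⟩ g => ?_⟩
  rw [← ofAdd_toAdd g, of_ofAdd_eq_τ_pow_mul_τ_pow, ← mul_assoc, mul_pow_eq_self h₁,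
    mul_pow_eq_self h₂]

theorem mul_tr_of_mem_span_TG (p : ℕ) [NeZero p] {η : GA p} (hη : η ∈ Ideal.span {TG p})
    (v : ZMod p × ZMod p) : η * tr p v = p * η :=
  mul_geom_sum_eq_of_mul_eq_self (mem_span_groupSum_iff.1 hη _) p

theorem d₂_eq_zero_iff (p : ℕ) [NeZero p] (η ξ : GA p) :
    (-(η * (τ p (1, 0) - 1)) = 0 ∧ -(η * (τ p (0, 1) - 1)) = 0 ∧
        η * tr p (1, 1) + ξ = 0 ∧ η * tr p (1, -1) + ξ = 0) ↔
      ∃ x ∈ Ideal.span ({TG p} : Set (GA p)), η = x ∧ ξ = -(p : GA p) * x := by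
  simp only [neg_eq_zero, mul_sub_one, sub_eq_zero]
  constructor
  · rintro ⟨h₁, h₂, h₃, -⟩
    have hη : η ∈ Ideal.span {TG p} := (mem_span_TG_iff p).2 ⟨h₁, h₂⟩
    refine ⟨η, hη, rfl, ?_⟩
    rw [mul_tr_of_mem_span_TG p hη] at h₃
    linear_combination h₃
  · rintro ⟨x, hx, rfl, rfl⟩
    obtain ⟨h₁, h₂⟩ := (mem_span_TG_iff p).1 hx
    refine ⟨h₁, h₂, ?_, ?_⟩ <;> rw [mul_tr_of_mem_span_TG p hx] <;> ring

theorem stmt8_general (p : ℕ) [NeZero p] :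
    -- d₂ ∘ d₁ = 0
    (∀ n : GA p,
      -((n * TG p) * (τ p (1, 0) - 1)) = 0 ∧
      -((n * TG p) * (τ p (0, 1) - 1)) = 0 ∧
      (n * TG p) * tr p (1, 1) + (-(p : GA p) * (n * TG p)) = 0 ∧
      (n * TG p) * tr p (1, -1) + (-(p : GA p) * (n * TG p)) = 0) ∧
    -- d₁ is injective on M₁ = ℤ[G]·T_G
    Function.Injective (fun x : Ideal.span ({TG p} : Set (GA p)) =>
      ((x : GA p), -(p : GA p) * (x : GA p))) ∧
    -- ker d₂ = im d₁
    (∀ η ξ : GA p, ξ ∈ Ideal.span ({TG p} : Set (GA p)) →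
      ((-(η * (τ p (1, 0) - 1)) = 0 ∧ -(η * (τ p (0, 1) - 1)) = 0 ∧
        η * tr p (1, 1) + ξ = 0 ∧ η * tr p (1, -1) + ξ = 0) ↔
       (∃ x ∈ Ideal.span ({TG p} : Set (GA p)), η = x ∧ ξ = -(p : GA p) * x))) := by
  refine ⟨fun n => ?_, fun x y hxy => Subtype.ext (congrArg Prod.fst hxy),
    fun η ξ _ => d₂_eq_zero_iff p η ξ⟩
  exact (d₂_eq_zero_iff p _ _).2
    ⟨n * TG p, Ideal.mul_mem_left _ _ (Ideal.mem_span_singleton_self _), rfl, rfl⟩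

/-- The four-term sequence data: `M₁ = ℤ[G]·T_G`, `M₂ = ℤ[G] ⊕ ℤ[G]·T_G`,
`M₃ = ℤ[G] ⊕ ℤ[G] ⊕ ℤ[G]·T₃ ⊕ ℤ[G]·T_{p+1}`, with
`d₁(x) = (x, −p·x)` (for `x = n·T_G ∈ ℤ[G]T_G`) and
`d₂(η, ξ) = (−ηt₁, −ηt₂, ηT₃ + ξ, ηT_{p+1} + ξ)` (for `ξ = n·T_G ∈ ℤ[G]T_G`).
Then `d₂ ∘ d₁ = 0`, `d₁` is injective, and `ker d₂ = im d₁`, stated elementwise. -/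
theorem stmt8 (p : ℕ) [NeZero p] (hp : p.Prime) (hodd : Odd p) :
    -- d₂ ∘ d₁ = 0
    (∀ n : GA p,
      -((n * TG p) * (τ p (1, 0) - 1)) = 0 ∧
      -((n * TG p) * (τ p (0, 1) - 1)) = 0 ∧
      (n * TG p) * tr p (1, 1) + (-(p : GA p) * (n * TG p)) = 0 ∧
      (n * TG p) * tr p (1, -1) + (-(p : GA p) * (n * TG p)) = 0) ∧
    -- d₁ is injective on M₁ = ℤ[G]·T_G
    Function.Injective (fun x : Ideal.span ({TG p} : Set (GA p)) =>
      ((x : GA p), -(p : GA p) * (x : GA p))) ∧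
    -- ker d₂ = im d₁
    (∀ η ξ : GA p, ξ ∈ Ideal.span ({TG p} : Set (GA p)) →
      ((-(η * (τ p (1, 0) - 1)) = 0 ∧ -(η * (τ p (0, 1) - 1)) = 0 ∧
        η * tr p (1, 1) + ξ = 0 ∧ η * tr p (1, -1) + ξ = 0) ↔
       (∃ x ∈ Ideal.span ({TG p} : Set (GA p)), η = x ∧ ξ = -(p : GA p) * x))) :=
  stmt8_general p
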